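/- If N is a pure submodule of a right R-module T, then: if T is M-𝒜-flat, both N and T/N are M-𝒜-flat; and if T is strongly M-𝒜-flat, both N and T/N are strongly M-𝒜-flat. -/

import Mathlib

open TensorProduct MulOpposite CategoryTheory

universe u

section NC

variable (R : Type u) [Ring R]

/-- The defining relations of the tensor product `N ⊗[R] X` of a right `R`-module `N`
and a left `R`-module `X` over a (possibly noncommutative) ring `R`, inside `N ⊗[ℤ] X`. -/
def ncRel (N : Type u) [AddCommGroup N] [Module Rᵐᵒᵖ N]
    (X : Type u) [AddCommGroup X] [Module R X] : Submodule ℤ (N ⊗[ℤ] X) :=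
  Submodule.span ℤ {z | ∃ (r : R) (n : N) (x : X), z = (op r • n) ⊗ₜ[ℤ] x - n ⊗ₜ[ℤ] (r • x)}

/-- The tensor product `N ⊗[R] X` of a right `R`-module `N` and a left `R`-module `X`
over a (possibly noncommutative) ring `R`. -/
abbrev NCTensor (N : Type u) [AddCommGroup N] [Module Rᵐᵒᵖ N]
    (X : Type u) [AddCommGroup X] [Module R X] : Type u :=
  (N ⊗[ℤ] X) ⧸ ncRel R N X

/-- Functoriality of the tensor product in the left (right-module) variable. -/
noncomputable def ncMapL {N N' : Type u} [AddCommGroup N] [Module Rᵐᵒᵖ N]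
    [AddCommGroup N'] [Module Rᵐᵒᵖ N'] (g : N →ₗ[Rᵐᵒᵖ] N')
    (X : Type u) [AddCommGroup X] [Module R X] :
    NCTensor R N X →ₗ[ℤ] NCTensor R N' X :=
  Submodule.mapQ _ _ (LinearMap.rTensor X g.toAddMonoidHom.toIntLinearMap) (by
    rw [ncRel, Submodule.span_le]
    rintro _ ⟨r, n, x, rfl⟩
    show LinearMap.rTensor X g.toAddMonoidHom.toIntLinearMap ((op r • n) ⊗ₜ[ℤ] x - n ⊗ₜ[ℤ] (r • x)) ∈ ncRel R N' X
    simp only [SetLike.mem_coe, Submodule.mem_comap, map_sub, LinearMap.rTensor_tmul]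
    have h : g.toAddMonoidHom.toIntLinearMap (op r • n) =
        op r • g.toAddMonoidHom.toIntLinearMap n := by
      simp [map_smul]
    rw [h]
    exact Submodule.subset_span ⟨r, g n, x, rfl⟩)

/-- Functoriality of the tensor product in the right (left-module) variable. -/
noncomputable def ncMap (N : Type u) [AddCommGroup N] [Module Rᵐᵒᵖ N]
    {X Y : Type u} [AddCommGroup X] [Module R X] [AddCommGroup Y] [Module R Y]
    (f : X →ₗ[R] Y) : NCTensor R N X →ₗ[ℤ] NCTensor R N Y :=
  Submodule.mapQ _ _ (LinearMap.lTensor N f.toAddMonoidHom.toIntLinearMap) (by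
    rw [ncRel, Submodule.span_le]
    rintro _ ⟨r, n, x, rfl⟩
    show LinearMap.lTensor N f.toAddMonoidHom.toIntLinearMap ((op r • n) ⊗ₜ[ℤ] x - n ⊗ₜ[ℤ] (r • x)) ∈ ncRel R N Y
    simp only [SetLike.mem_coe, Submodule.mem_comap, map_sub, LinearMap.lTensor_tmul]
    have h : f.toAddMonoidHom.toIntLinearMap (r • x) =
        r • f.toAddMonoidHom.toIntLinearMap x := by
      simp [map_smul]
    rw [h]
    exact Submodule.subset_span ⟨r, n, f x, rfl⟩)

lemma ncMap_mk (N : Type u) [AddCommGroup N] [Module Rᵐᵒᵖ N]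
    {X Y : Type u} [AddCommGroup X] [Module R X] [AddCommGroup Y] [Module R Y]
    (f : X →ₗ[R] Y) (w : N ⊗[ℤ] X) :
    ncMap R N f (Submodule.Quotient.mk w) =
      Submodule.Quotient.mk (LinearMap.lTensor N f.toAddMonoidHom.toIntLinearMap w) := by
  unfold ncMap
  exact Submodule.mapQ_apply (p := ncRel R N X) (q := ncRel R N Y) (LinearMap.lTensor N f.toAddMonoidHom.toIntLinearMap) w

section lemmas

variable {R}
variable {X Y Z : Type u} [AddCommGroup X] [Module R X] [AddCommGroup Y] [Module R Y]
  [AddCommGroup Z] [Module R Z]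

lemma toInt_id : ((LinearMap.id : X →ₗ[R] X).toAddMonoidHom).toIntLinearMap =
    (LinearMap.id : X →ₗ[ℤ] X) := rfl

lemma toInt_comp (f : X →ₗ[R] Y) (g : Y →ₗ[R] Z) :
    ((g ∘ₗ f).toAddMonoidHom).toIntLinearMap =
      g.toAddMonoidHom.toIntLinearMap ∘ₗ f.toAddMonoidHom.toIntLinearMap := rfl

lemma toInt_add (f g : X →ₗ[R] Y) :
    ((f + g).toAddMonoidHom).toIntLinearMap =
      f.toAddMonoidHom.toIntLinearMap + g.toAddMonoidHom.toIntLinearMap := rfl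

end lemmas

/-- The functor `N ⊗[R] - : R-Mod ⥤ Ab` for a right `R`-module `N`. -/
noncomputable def ncTensorFunctor (N : Type u) [AddCommGroup N] [Module Rᵐᵒᵖ N] :
    ModuleCat.{u} R ⥤ ModuleCat.{u} ℤ where
  obj X := ModuleCat.of ℤ (NCTensor R N X)
  map {X Y} f := ModuleCat.ofHom (ncMap R N f.hom)
  map_id X := by
    refine ModuleCat.hom_ext (LinearMap.ext fun z => ?_)
    obtain ⟨w, rfl⟩ := Submodule.Quotient.mk_surjective _ z
    show ncMap R N (LinearMap.id : X →ₗ[R] X) _ = _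
    rw [ncMap_mk, toInt_id, LinearMap.lTensor_id]
    rfl
  map_comp {X Y Z} f g := by
    refine ModuleCat.hom_ext (LinearMap.ext fun z => ?_)
    obtain ⟨w, rfl⟩ := Submodule.Quotient.mk_surjective _ z
    show ncMap R N (g.hom ∘ₗ f.hom) (Submodule.Quotient.mk w) = ncMap R N g.hom (ncMap R N f.hom (Submodule.Quotient.mk w))
    rw [ncMap_mk, ncMap_mk, ncMap_mk, toInt_comp, LinearMap.lTensor_comp]
    rfl

instance ncTensorFunctor_additive (N : Type u) [AddCommGroup N] [Module Rᵐᵒᵖ N] :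
    (ncTensorFunctor R N).Additive where
  map_add {X Y f g} := by
    refine ModuleCat.hom_ext (LinearMap.ext fun z => ?_)
    obtain ⟨w, rfl⟩ := Submodule.Quotient.mk_surjective _ z
    show ncMap R N (f.hom + g.hom) (Submodule.Quotient.mk w) = ncMap R N f.hom (Submodule.Quotient.mk w) + ncMap R N g.hom (Submodule.Quotient.mk w)
    rw [ncMap_mk, ncMap_mk, ncMap_mk, toInt_add, LinearMap.lTensor_add]
    rfl

/-- `Tor₁^R(N, Z)` for a right `R`-module `N` and a left `R`-module `Z`, defined as the value at
`Z` of the first left derived functor of the functor `N ⊗[R] -`. -/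
noncomputable def ncTor1 (N : Type u) [AddCommGroup N] [Module Rᵐᵒᵖ N]
    (Z : Type u) [AddCommGroup Z] [Module R Z] : ModuleCat.{u} ℤ :=
  (((ncTensorFunctor R N).leftDerived 1).obj (ModuleCat.of R Z))

/-- `Tor₁^R(N, Z) = 0`. -/
def Tor1IsZero (N : Type u) [AddCommGroup N] [Module Rᵐᵒᵖ N]
    (Z : Type u) [AddCommGroup Z] [Module R Z] : Prop :=
  Limits.IsZero (ncTor1 R N Z)

/-- `Ext¹_R(Z, T) = 0`, where `Ext` is the derived functor of `Hom` on the category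
of left `R`-modules. -/
def Ext1IsZero (Z T : Type u) [AddCommGroup Z] [Module R Z] [AddCommGroup T] [Module R T] :
    Prop :=
  Limits.IsZero ((((Ext ℤ (ModuleCat.{u} R) 1).obj (Opposite.op (ModuleCat.of R Z))).obj
    (ModuleCat.of R T)))

end NC

open MulOpposite


section Char

variable (R : Type u) [Ring R]

/-- The right `R`-module structure on the character module `A⁺ = Hom_ℤ(A, ℚ/ℤ)` of a left
`R`-module `A`, given by `(c • r) (a) = c (r • a)`. -/
instance charModuleRight (A : Type u) [AddCommGroup A] [Module R A] :
    Module Rᵐᵒᵖ (CharacterModule A) where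
  smul r c := (c.comp (DistribMulAction.toAddMonoidHom A r.unop) : A →+ _)
  one_smul c := DFunLike.ext _ _ fun a => congrArg c (one_smul R a)
  mul_smul r s c := DFunLike.ext _ _ fun a => congrArg c (mul_smul s.unop r.unop a)
  smul_zero r := rfl
  smul_add r c c' := rfl
  add_smul r s c := DFunLike.ext _ _ fun a => by
    show c ((r.unop + s.unop) • a) = c (r.unop • a) + c (s.unop • a)
    rw [add_smul, map_add]
  zero_smul c := DFunLike.ext _ _ fun a => by
    show c ((0 : R) • a) = 0
    rw [zero_smul, map_zero]

/-- The left `R`-module structure on the character module `N⁺ = Hom_ℤ(N, ℚ/ℤ)` of a right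
`R`-module `N`, given by `(r • c) (n) = c (n • r)`. -/
instance charModuleLeft (N : Type u) [AddCommGroup N] [Module Rᵐᵒᵖ N] :
    Module R (CharacterModule N) where
  smul r c := (c.comp (DistribMulAction.toAddMonoidHom N (op r)) : N →+ _)
  one_smul c := DFunLike.ext _ _ fun n => congrArg c (one_smul Rᵐᵒᵖ n)
  mul_smul r s c := DFunLike.ext _ _ fun n => congrArg c (mul_smul (op s) (op r) n)
  smul_zero r := rfl
  smul_add r c c' := rfl
  add_smul r s c := DFunLike.ext _ _ fun n => by
    show c ((op r + op s) • n) = c (op r • n) + c (op s • n)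
    rw [add_smul, map_add]
  zero_smul c := DFunLike.ext _ _ fun n => by
    show c ((0 : Rᵐᵒᵖ) • n) = 0
    rw [zero_smul, map_zero]

end Char

section Classes

variable (R : Type u) [Ring R] (M : Type u) [AddCommGroup M] [Module R M]

/-- `T` is `M`-`𝒜`-injective if, for every `A ∈ 𝒜`, every homomorphism `A → T` extends to `M`,
i.e. the restriction map `Hom(M, T) → Hom(A, T)` is surjective. -/
def MAInjective (𝒜 : Set (Submodule R M)) (T : Type u) [AddCommGroup T] [Module R T] : Prop :=
  ∀ A ∈ 𝒜, ∀ f : (↥A) →ₗ[R] T, ∃ g : M →ₗ[R] T, g ∘ₗ A.subtype = f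

/-- `T` is strongly `M`-`𝒜`-injective if `Ext¹_R(M/A, T) = 0` for all `A ∈ 𝒜`. -/
def SMAInjective (𝒜 : Set (Submodule R M)) (T : Type u) [AddCommGroup T] [Module R T] : Prop :=
  ∀ A ∈ 𝒜, Ext1IsZero R (M ⧸ A) T

/-- A right `R`-module `N` is `M`-`𝒜`-flat if `N ⊗ A → N ⊗ M` is injective for all `A ∈ 𝒜`. -/
def MAFlat (𝒜 : Set (Submodule R M)) (N : Type u) [AddCommGroup N] [Module Rᵐᵒᵖ N] : Prop :=
  ∀ A ∈ 𝒜, Function.Injective (ncMap R N A.subtype)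

/-- A right `R`-module `N` is strongly `M`-`𝒜`-flat if `Tor₁^R(N, M/A) = 0` for all `A ∈ 𝒜`. -/
def SMAFlat (𝒜 : Set (Submodule R M)) (N : Type u) [AddCommGroup N] [Module Rᵐᵒᵖ N] : Prop :=
  ∀ A ∈ 𝒜, Tor1IsZero R N (M ⧸ A)

end Classes

section Flat

variable (R : Type u) [Ring R]

/-- A left `R`-module `Z` is flat if tensoring with it preserves injectivity of morphisms of
right `R`-modules. -/
def FlatLeftModule (Z : Type u) [AddCommGroup Z] [Module R Z] : Prop :=
  ∀ (N N' : Type u) [AddCommGroup N] [Module Rᵐᵒᵖ N] [AddCommGroup N'] [Module Rᵐᵒᵖ N']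
    (g : N' →ₗ[Rᵐᵒᵖ] N), Function.Injective g → Function.Injective (ncMapL R g Z)

end Flat

/-!
For `A ⊆ M`, injectivity of `N ⊗ A → N ⊗ M` follows from that of `T ⊗ A → T ⊗ M` by naturality,
as `N ⊗ A → T ⊗ A` is injective; injectivity of `T/N ⊗ A → T/N ⊗ M` follows by a diagram chase
through `0 → N → T → T/N → 0` against `A → M → M/A → 0`, using right exactness of `⊗` and
purity at `M/A`.

Strong flatness reduces to this: if `K ↪ P₀ ↠ M/A` is the start of a projective resolution,
then `Tor₁(W, M/A) = 0` iff `W ⊗ K → W ⊗ P₀` is injective, i.e. `Tor₁(-, M/A)` vanishes exactly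
on the modules that are flat relative to `K ⊆ P₀`.
-/

section Tensor

variable {R : Type u} [Ring R]
  {N N' N'' : Type u} [AddCommGroup N] [Module Rᵐᵒᵖ N]
  [AddCommGroup N'] [Module Rᵐᵒᵖ N'] [AddCommGroup N''] [Module Rᵐᵒᵖ N'']
  {X Y Z : Type u} [AddCommGroup X] [Module R X] [AddCommGroup Y] [Module R Y]
  [AddCommGroup Z] [Module R Z]

lemma ncMapL_mk (g : N →ₗ[Rᵐᵒᵖ] N') (w : N ⊗[ℤ] X) :
    ncMapL R g X (Submodule.Quotient.mk w) =
      Submodule.Quotient.mk (LinearMap.rTensor X g.toAddMonoidHom.toIntLinearMap w) :=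
  Submodule.mapQ_apply _ _ _ w

lemma ncMap_comp (f : X →ₗ[R] Y) (g : Y →ₗ[R] Z) :
    ncMap R N (g ∘ₗ f) = ncMap R N g ∘ₗ ncMap R N f :=
  congrArg ModuleCat.Hom.hom
    ((ncTensorFunctor R N).map_comp (ModuleCat.ofHom f) (ModuleCat.ofHom g))

lemma ncMapL_ncMap_apply (g : N →ₗ[Rᵐᵒᵖ] N') (f : X →ₗ[R] Y) (z : NCTensor R N X) :
    ncMapL R g Y (ncMap R N f z) = ncMap R N' f (ncMapL R g X z) := by
  obtain ⟨w, rfl⟩ := Submodule.Quotient.mk_surjective _ z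
  rw [ncMap_mk, ncMapL_mk, ncMapL_mk, ncMap_mk, ← LinearMap.comp_apply, ← LinearMap.comp_apply,
    LinearMap.rTensor_comp_lTensor, LinearMap.lTensor_comp_rTensor]

lemma ncMap_surjective {f : X →ₗ[R] Y} (hf : Function.Surjective f) :
    Function.Surjective (ncMap R N f) := by
  intro z
  obtain ⟨w, rfl⟩ := Submodule.Quotient.mk_surjective _ z
  obtain ⟨v, rfl⟩ := LinearMap.lTensor_surjective N (g := f.toAddMonoidHom.toIntLinearMap) hf w
  exact ⟨Submodule.Quotient.mk v, ncMap_mk R N f v⟩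

lemma ncMapL_surjective {g : N →ₗ[Rᵐᵒᵖ] N'} (hg : Function.Surjective g) :
    Function.Surjective (ncMapL R g X) := by
  intro z
  obtain ⟨w, rfl⟩ := Submodule.Quotient.mk_surjective _ z
  obtain ⟨v, rfl⟩ := LinearMap.rTensor_surjective X (g := g.toAddMonoidHom.toIntLinearMap) hg w
  exact ⟨Submodule.Quotient.mk v, ncMapL_mk g v⟩

lemma ncRel_le_map_lTensor {g : Y →ₗ[R] Z} (hg : Function.Surjective g) :
    ncRel R N Z ≤ (ncRel R N Y).map (LinearMap.lTensor N g.toAddMonoidHom.toIntLinearMap) := by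
  refine Submodule.span_le.2 ?_
  rintro _ ⟨r, n, z, rfl⟩
  obtain ⟨y, rfl⟩ := hg z
  refine ⟨_, Submodule.subset_span ⟨r, n, y, rfl⟩, ?_⟩
  simp

lemma ncRel_le_map_rTensor {g : N →ₗ[Rᵐᵒᵖ] N'} (hg : Function.Surjective g) :
    ncRel R N' X ≤ (ncRel R N X).map (LinearMap.rTensor X g.toAddMonoidHom.toIntLinearMap) := by
  refine Submodule.span_le.2 ?_
  rintro _ ⟨r, n', x, rfl⟩
  obtain ⟨n, rfl⟩ := hg n'
  refine ⟨_, Submodule.subset_span ⟨r, n, x, rfl⟩, ?_⟩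
  simp

lemma ncMap_exact {f : X →ₗ[R] Y} {g : Y →ₗ[R] Z} (hfg : Function.Exact f g)
    (hg : Function.Surjective g) :
    Function.Exact (ncMap R N f) (ncMap R N g) :=
  ((lTensor_exact N hfg hg).exact_mapQ_iff _ _).2
    (inf_le_right.trans (ncRel_le_map_lTensor hg))

lemma ncMapL_exact {g : N →ₗ[Rᵐᵒᵖ] N'} {g' : N' →ₗ[Rᵐᵒᵖ] N''} (hgg' : Function.Exact g g')
    (hg' : Function.Surjective g') :
    Function.Exact (ncMapL R g X) (ncMapL R g' X) :=
  ((rTensor_exact X hgg' hg').exact_mapQ_iff _ _).2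
    (inf_le_right.trans (ncRel_le_map_rTensor hg'))

end Tensor

lemma LinearMap.exact_comp_iff_injective {S : Type*} [Semiring S] {M₁ M₂ M₃ M₄ : Type*}
    [AddCommGroup M₁] [AddCommGroup M₂] [AddCommGroup M₃] [AddCommGroup M₄]
    [Module S M₁] [Module S M₂] [Module S M₃] [Module S M₄]
    {f : M₁ →ₗ[S] M₂} {e : M₂ →ₗ[S] M₃} {i : M₃ →ₗ[S] M₄}
    (hfe : Function.Exact f e) (he : Function.Surjective e) :
    Function.Exact f (i ∘ₗ e) ↔ Function.Injective i := by
  refine ⟨fun h => (injective_iff_map_eq_zero i).2 fun y hy => ?_,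
    fun hi => hfe.comp_injective _ hi (map_zero i)⟩
  obtain ⟨x, rfl⟩ := he y
  obtain ⟨v, rfl⟩ := (h x).1 hy
  exact hfe.apply_apply_eq_zero v

section Tor

variable {R : Type u} [Ring R] (W : Type u) [AddCommGroup W] [Module Rᵐᵒᵖ W]
  {Z : Type u} [AddCommGroup Z] [Module R Z] (P : ProjectiveResolution (ModuleCat.of R Z))

lemma tor1IsZero_iff_exact :
    Tor1IsZero R W Z ↔
      Function.Exact (ncMap R W (P.complex.d 2 1).hom) (ncMap R W (P.complex.d 1 0).hom) := by
  rw [Tor1IsZero, ncTor1, (P.isoLeftDerivedObj (ncTensorFunctor R W) 1).isZero_iff]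
  change Limits.IsZero (HomologicalComplex.homology _ 1) ↔ _
  rw [← HomologicalComplex.exactAt_iff_isZero_homology,
    HomologicalComplex.exactAt_iff' _ 2 1 0 (by simp) (by simp),
    ShortComplex.ShortExact.moduleCat_exact_iff_function_exact]
  rfl

lemma tor1IsZero_iff_injective :
    Tor1IsZero R W Z ↔
      Function.Injective (ncMap R W (LinearMap.range (P.complex.d 1 0).hom).subtype) := by
  have hres : Function.Exact (P.complex.d 2 1).hom (P.complex.d 1 0).hom.rangeRestrict :=
    (LinearMap.range _).injective_subtype.comp_exact_iff_exact.1
      ((ShortComplex.ShortExact.moduleCat_exact_iff_function_exact _).1 (P.exact_succ 0))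
  have hd : ncMap R W (LinearMap.range (P.complex.d 1 0).hom).subtype ∘ₗ
      ncMap R W (P.complex.d 1 0).hom.rangeRestrict = ncMap R W (P.complex.d 1 0).hom := by
    rw [← ncMap_comp, LinearMap.subtype_comp_codRestrict]
  rw [tor1IsZero_iff_exact W P, ← hd]
  exact LinearMap.exact_comp_iff_injective
    (ncMap_exact hres (LinearMap.surjective_rangeRestrict _))
    (ncMap_surjective (LinearMap.surjective_rangeRestrict _))

end Tor

section Pure

variable {R : Type u} [Ring R]
  {N T Q : Type u} [AddCommGroup N] [Module Rᵐᵒᵖ N] [AddCommGroup T] [Module Rᵐᵒᵖ T]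
  [AddCommGroup Q] [Module Rᵐᵒᵖ Q]
  {X Y Z : Type u} [AddCommGroup X] [Module R X] [AddCommGroup Y] [Module R Y]
  [AddCommGroup Z] [Module R Z]

lemma injective_ncMap_of_injective_ncMapL {g : N →ₗ[Rᵐᵒᵖ] T} {f : X →ₗ[R] Y}
    (hg : Function.Injective (ncMapL R g X)) (hf : Function.Injective (ncMap R T f)) :
    Function.Injective (ncMap R N f) := by
  refine Function.Injective.of_comp (f := ncMapL R g Y) ?_
  have hcomm : ncMapL R g Y ∘ ncMap R N f = ncMap R T f ∘ ncMapL R g X :=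
    funext (ncMapL_ncMap_apply g f)
  rw [hcomm]
  exact hf.comp hg

lemma injective_ncMap_of_exact {g : N →ₗ[Rᵐᵒᵖ] T} {q : T →ₗ[Rᵐᵒᵖ] Q}
    (hgq : Function.Exact g q) (hq : Function.Surjective q)
    {f : X →ₗ[R] Y} {p : Y →ₗ[R] Z} (hfp : Function.Exact f p) (hp : Function.Surjective p)
    (hg : Function.Injective (ncMapL R g Z)) (hf : Function.Injective (ncMap R T f)) :
    Function.Injective (ncMap R Q f) := by
  refine (injective_iff_map_eq_zero _).2 fun z hz => ?_
  obtain ⟨w, rfl⟩ := ncMapL_surjective hq z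
  obtain ⟨u, hu⟩ : ∃ u, ncMapL R g Y u = ncMap R T f w :=
    (ncMapL_exact hgq hq _).1 (by rwa [ncMapL_ncMap_apply])
  have hpu : ncMap R N p u = 0 := hg (by
    rw [ncMapL_ncMap_apply, hu, (ncMap_exact hfp hp).apply_apply_eq_zero, map_zero])
  obtain ⟨v, rfl⟩ := (ncMap_exact hfp hp u).1 hpu
  obtain rfl : ncMapL R g X v = w := hf (by rw [← ncMapL_ncMap_apply, hu])
  exact (ncMapL_exact hgq hq).apply_apply_eq_zero v

end Pure

/-- If `N` is a pure submodule of a right `R`-module `T`, then: if `T` is `M`-`𝒜`-flat, so are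
`N` and `T/N`; and if `T` is strongly `M`-`𝒜`-flat, so are `N` and `T/N`. -/
theorem stmt9 (R : Type u) [Ring R] (M : Type u) [AddCommGroup M] [Module R M]
    (𝒜 : Set (Submodule R M)) (T : Type u) [AddCommGroup T] [Module Rᵐᵒᵖ T]
    (N : Submodule Rᵐᵒᵖ T)
    (hpure : ∀ (X : Type u) [AddCommGroup X] [Module R X],
      Function.Injective (ncMapL R N.subtype X)) :
    (MAFlat R M 𝒜 T → MAFlat R M 𝒜 (↥N) ∧ MAFlat R M 𝒜 (T ⧸ N)) ∧
    (SMAFlat R M 𝒜 T → SMAFlat R M 𝒜 (↥N) ∧ SMAFlat R M 𝒜 (T ⧸ N)) := by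
  have hrel : ∀ (X : Type u) [AddCommGroup X] [Module R X] (K : Submodule R X),
      Function.Injective (ncMap R T K.subtype) →
        Function.Injective (ncMap R N K.subtype) ∧
          Function.Injective (ncMap R (T ⧸ N) K.subtype) := fun X _ _ K hK =>
    ⟨injective_ncMap_of_injective_ncMapL (hpure K) hK,
      injective_ncMap_of_exact (LinearMap.exact_subtype_mkQ N) N.mkQ_surjective
        (LinearMap.exact_subtype_mkQ K) K.mkQ_surjective (hpure (X ⧸ K)) hK⟩
  have htor : ∀ A : Submodule R M, Tor1IsZero R T (M ⧸ A) →
      Tor1IsZero R N (M ⧸ A) ∧ Tor1IsZero R (T ⧸ N) (M ⧸ A) := by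
    intro A hA
    obtain ⟨P⟩ : Nonempty (ProjectiveResolution (ModuleCat.of R (M ⧸ A))) :=
      HasProjectiveResolution.out
    rw [tor1IsZero_iff_injective _ P, tor1IsZero_iff_injective _ P]
    exact hrel _ _ ((tor1IsZero_iff_injective T P).1 hA)
  exact ⟨fun hT => ⟨fun A hA => (hrel M A (hT A hA)).1, fun A hA => (hrel M A (hT A hA)).2⟩,
    fun hT => ⟨fun A hA => (htor A (hT A hA)).1, fun A hA => (htor A (hT A hA)).2⟩⟩
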